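/- Let k be a field with char(k) ≠ 2 and n ∈ {3,4,5}. Let V₆ be a 6-dimensional k-vector space, V₅ ⊂ V₆ a 5-dimensional subspace, W ⊆ ⋀²V₅ a subspace with dim W = n+5, ε : ⋀⁵V₅ → k a linear isomorphism, and q : V₆ → {bilinear forms on W} a linear map such that each q(v) is symmetric and q(v)(w, w′) = ε(v∧w∧w′) for all v ∈ V₅ and w, w′ ∈ W. For v₀ ∈ V₆ ∖ V₅ define A(v₀) := {ξ + v₀∧w : ξ ∈ ⋀³V₅, w ∈ W, and ε(ξ∧w″) + q(v₀)(w, w″) = 0 for all w″ ∈ W} ⊆ ⋀³V₆. Then A(v₀) is independent of the choice of v₀: for all v₀, v₀′ ∈ V₆ ∖ V₅ one has A(v₀) = A(v₀′). -/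

import Mathlib

/-!
Any other choice of `v₀' ∉ V₅` has the form `v₀' = c • v₀ + u` with `c ≠ 0` and `u ∈ V₅`, since
`V₅` is a hyperplane. Then `ξ + v₀ ∧ w = (ξ - c⁻¹ • u ∧ w) + v₀' ∧ (c⁻¹ • w)`, and the compatibility
`q(u)(w, w'') = ε(u ∧ w ∧ w'')` for `u ∈ V₅` shows that the correction term `-c⁻¹ • u ∧ w ∈ ⋀³V₅`
exactly absorbs the change of `q(v₀)` into `q(v₀')` in the defining equation.
-/

noncomputable section

/-- For a subspace `U` of `V`, the subspace `⋀ⁿU` of the exterior algebra of `V` spanned by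
`n`-fold wedge products of elements of `U`.  Taking `U = ⊤` gives `⋀ⁿV`. -/
def wedgePow {k V : Type*} [Field k] [AddCommGroup V] [Module k V]
    (U : Submodule k V) (n : ℕ) : Submodule k (ExteriorAlgebra k V) :=
  (Submodule.map (ExteriorAlgebra.ι k) U) ^ n

theorem Submodule.exists_smul_add_of_finrank_eq_succ {k V : Type*} [Field k] [AddCommGroup V]
    [Module k V] {U : Submodule k V} (hU : Module.finrank k V = Module.finrank k U + 1)
    {v : V} (hv : v ∉ U) (v' : V) : ∃ c : k, ∃ u ∈ U, v' = c • v + u := by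
  have : Module.Finite k V := Module.finite_of_finrank_pos (by omega)
  have htop : span k (insert v (U : Set V)) = ⊤ := by
    apply eq_top_of_finrank_eq
    rw [span_insert, span_eq, sup_comm, finrank_sup_span_singleton hv, hU]
  simpa only [span_eq] using mem_span_insert.1 (htop ▸ mem_top : v' ∈ span k (insert v ↑U))

theorem ι_mul_mem_wedgePow_succ {k V : Type*} [Field k] [AddCommGroup V] [Module k V]
    {U : Submodule k V} {n : ℕ} {u : V} (hu : u ∈ U) {x : ExteriorAlgebra k V}
    (hx : x ∈ wedgePow U n) : ExteriorAlgebra.ι k u * x ∈ wedgePow U (n + 1) := by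
  rw [wedgePow, pow_succ']
  exact Submodule.mul_mem_mul (Submodule.mem_map_of_mem hu) hx

section GMDatum

variable {k V₆ : Type*} [Field k] [AddCommGroup V₆] [Module k V₆]
  (V₅ : Submodule k V₆) (W : Submodule k (ExteriorAlgebra k V₆))
  (ε : ExteriorAlgebra k V₆ →ₗ[k] k) (q : V₆ →ₗ[k] W →ₗ[k] W →ₗ[k] k)

/-- The Lagrangian `A(v₀)` attached to a GM datum and a vector `v₀ ∉ V₅`. -/
def gmLagrangian (v₀ : V₆) : Set (ExteriorAlgebra k V₆) :=
  {x | ∃ ξ ∈ wedgePow V₅ 3, ∃ w : W,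
    x = ξ + ExteriorAlgebra.ι k v₀ * (w : ExteriorAlgebra k V₆) ∧
    ∀ w'' : W, ε (ξ * (w'' : ExteriorAlgebra k V₆)) + q v₀ w w'' = 0}

variable {V₅ W ε q}

theorem gmLagrangian_subset_smul_add (hW2 : W ≤ wedgePow V₅ 2)
    (hqcomp : ∀ v ∈ V₅, ∀ w w' : W,
      q v w w' = ε (ExteriorAlgebra.ι k v * (w : ExteriorAlgebra k V₆) *
        (w' : ExteriorAlgebra k V₆)))
    (v₀ : V₆) {c : k} (hc : c ≠ 0) {u : V₆} (hu : u ∈ V₅) :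
    gmLagrangian V₅ W ε q v₀ ⊆ gmLagrangian V₅ W ε q (c • v₀ + u) := by
  rintro x ⟨ξ, hξ, w, rfl, hcond⟩
  refine ⟨ξ - c⁻¹ • (ExteriorAlgebra.ι k u * w), ?_, c⁻¹ • w, ?_, fun w'' ↦ ?_⟩
  · exact sub_mem hξ (Submodule.smul_mem _ _ (ι_mul_mem_wedgePow_succ hu (hW2 w.2)))
  · simp only [Submodule.coe_smul, map_add, map_smul, add_mul, smul_mul_assoc, mul_smul_comm,
      smul_add, smul_smul, inv_mul_cancel₀ hc, one_smul]
    abel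
  · simp only [map_add, map_smul, LinearMap.add_apply, LinearMap.smul_apply, sub_mul, map_sub,
      smul_mul_assoc, hqcomp u hu, smul_eq_mul]
    field_simp
    linear_combination c * hcond w''

theorem gmLagrangian_subset (hV₅ : Module.finrank k V₆ = Module.finrank k V₅ + 1)
    (hW2 : W ≤ wedgePow V₅ 2)
    (hqcomp : ∀ v ∈ V₅, ∀ w w' : W,
      q v w w' = ε (ExteriorAlgebra.ι k v * (w : ExteriorAlgebra k V₆) *
        (w' : ExteriorAlgebra k V₆)))
    {v₀ v₀' : V₆} (hv₀ : v₀ ∉ V₅) (hv₀' : v₀' ∉ V₅) :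
    gmLagrangian V₅ W ε q v₀ ⊆ gmLagrangian V₅ W ε q v₀' := by
  obtain ⟨c, u, hu, rfl⟩ := Submodule.exists_smul_add_of_finrank_eq_succ hV₅ hv₀ v₀'
  have hc : c ≠ 0 := by
    rintro rfl
    exact hv₀' (by simpa using hu)
  exact gmLagrangian_subset_smul_add hW2 hqcomp v₀ hc hu

end GMDatum

theorem gm_datum_lagrangian_independent_of_v0
    {k V₆ : Type*} [Field k] [AddCommGroup V₆] [Module k V₆]
    (hdim6 : Module.finrank k V₆ = 6)
    (V₅ : Submodule k V₆) (hdim5 : Module.finrank k V₅ = 5)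
    (W : Submodule k (ExteriorAlgebra k V₆)) (hW2 : W ≤ wedgePow V₅ 2)
    (ε : ExteriorAlgebra k V₆ →ₗ[k] k)
    (q : V₆ →ₗ[k] W →ₗ[k] W →ₗ[k] k)
    (hqcomp : ∀ v ∈ V₅, ∀ w w' : W,
      q v w w' = ε (ExteriorAlgebra.ι k v * (w : ExteriorAlgebra k V₆) *
        (w' : ExteriorAlgebra k V₆)))
    (v₀ v₀' : V₆) (hv₀ : v₀ ∉ V₅) (hv₀' : v₀' ∉ V₅) :
    {x : ExteriorAlgebra k V₆ | ∃ ξ ∈ wedgePow V₅ 3, ∃ w : W,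
        x = ξ + ExteriorAlgebra.ι k v₀ * (w : ExteriorAlgebra k V₆) ∧
        ∀ w'' : W, ε (ξ * (w'' : ExteriorAlgebra k V₆)) + q v₀ w w'' = 0} =
    {x : ExteriorAlgebra k V₆ | ∃ ξ ∈ wedgePow V₅ 3, ∃ w : W,
        x = ξ + ExteriorAlgebra.ι k v₀' * (w : ExteriorAlgebra k V₆) ∧
        ∀ w'' : W, ε (ξ * (w'' : ExteriorAlgebra k V₆)) + q v₀' w w'' = 0} := by
  have hV₅ : Module.finrank k V₆ = Module.finrank k V₅ + 1 := by rw [hdim6, hdim5]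
  exact (gmLagrangian_subset hV₅ hW2 hqcomp hv₀ hv₀').antisymm
    (gmLagrangian_subset hV₅ hW2 hqcomp hv₀' hv₀)
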